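/- arXiv:1204.1070 — 7 statements merged into one kernel-verified Lean document; each statement's English description precedes it below -/
import Mathlib

section
/- Let f : ℝ → ℝ² be L-periodic and twice differentiable with absolutely integrable second derivative on [0,L]. Then (∫₀ᴸ |f'(t)| dt)² ≤ 8 · (∫₀ᴸ |f(t)| dt) · (∫₀ᴸ |f''(t)| dt). -/
/-!
Taylor's formula with a first-order remainder gives, for every `h ≥ 0`,
`h ‖f'(t)‖ ≤ ‖f(t + h)‖ + ‖f(t)‖ + h ∫ₜ^{t+h} ‖f''‖`. Integrating over a period and using
periodicity, `h ∫ ‖f'‖ ≤ 2 ∫ ‖f‖ + h² ∫ ‖f''‖` for all `h ≥ 0`, so the quadratic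
`h ↦ (∫ ‖f''‖) h² - (∫ ‖f'‖) h + 2 ∫ ‖f‖` is nonnegative and its discriminant
`(∫ ‖f'‖)² - 8 (∫ ‖f‖)(∫ ‖f''‖)` is nonpositive.
-/

open MeasureTheory Set

section

variable {E : Type*} [NormedAddCommGroup E] [NormedSpace ℝ E]

theorem Function.Periodic.deriv {f : ℝ → E} {L : ℝ} (hf : Function.Periodic f L) :
    Function.Periodic (deriv f) L := by
  intro t
  rw [← deriv_comp_add_const, show (fun x => f (x + L)) = f from funext hf]

theorem ContDiff.continuous_deriv_deriv {f : ℝ → E} (hf : ContDiff ℝ 2 f) :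
    Continuous (deriv (deriv f)) :=
  (hf.deriv' (n := 1)).continuous_deriv le_rfl

theorem intervalIntegral_eq_integral_comp_add (g : ℝ → E) (t h : ℝ) :
    ∫ s in t..t + h, g s = ∫ s in 0..h, g (t + s) := by
  simp [intervalIntegral.integral_comp_add_left]

theorem continuous_intervalIntegral_add {g : ℝ → E} (hg : Continuous g) (h : ℝ) :
    Continuous fun t => ∫ s in t..t + h, g s := by
  simp only [intervalIntegral_eq_integral_comp_add]
  exact intervalIntegral.continuous_parametric_intervalIntegral_of_continuous'
    (f := fun t s => g (t + s)) (hg.comp (continuous_fst.add continuous_snd)) 0 h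

variable [CompleteSpace E]

theorem Function.Periodic.intervalIntegral_intervalIntegral_add {g : ℝ → E} {L : ℝ}
    (hper : Function.Periodic g L) (hg : Continuous g) (h : ℝ) :
    ∫ t in 0..L, ∫ s in t..t + h, g s = h • ∫ t in 0..L, g t := by
  have hswap : IntegrableOn (Function.uncurry fun t s => g (t + s)) (uIoc 0 L ×ˢ uIoc 0 h) :=
    ((hg.comp (continuous_fst.add continuous_snd)).continuousOn.integrableOn_compact
      (isCompact_uIcc.prod isCompact_uIcc)).mono_set
      (prod_mono uIoc_subset_uIcc uIoc_subset_uIcc)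
  have hmean : ∀ s, ∫ t in 0..L, g (t + s) = ∫ t in 0..L, g t := fun s => by
    rw [intervalIntegral.integral_comp_add_right, zero_add, add_comm,
      hper.intervalIntegral_add_eq s 0, zero_add]
  simp only [intervalIntegral_eq_integral_comp_add]
  rw [intervalIntegral_intervalIntegral_swap hswap]
  simp [hmean]

theorem norm_deriv_sub_deriv_le_integral {f : ℝ → E} (hf : ContDiff ℝ 2 f) {t u : ℝ}
    (htu : t ≤ u) : ‖deriv f u - deriv f t‖ ≤ ∫ s in t..u, ‖deriv (deriv f) s‖ := by
  rw [← intervalIntegral.integral_eq_sub_of_hasDerivAt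
    (fun x _ => (hf.differentiable_deriv_two x).hasDerivAt)
    (hf.continuous_deriv_deriv |>.intervalIntegrable _ _)]
  exact intervalIntegral.norm_integral_le_integral_norm htu

theorem norm_sub_sub_smul_deriv_le {f : ℝ → E} (hf : ContDiff ℝ 2 f) (t : ℝ) {h : ℝ}
    (hh : 0 ≤ h) :
    ‖f (t + h) - f t - h • deriv f t‖ ≤ h * ∫ s in t..t + h, ‖deriv (deriv f) s‖ := by
  have hmvt := norm_image_sub_le_of_norm_deriv_le_segment'
    (f := fun u => f u - (u - t) • deriv f t) (f' := fun u => deriv f u - deriv f t)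
    (a := t) (b := t + h) (C := ∫ s in t..t + h, ‖deriv (deriv f) s‖)
    (fun u _ => by
      have := ((hf.differentiable (by norm_num) u).hasDerivAt).sub
        (((hasDerivAt_id u).sub_const t).smul_const (deriv f t))
      rw [one_smul] at this
      exact this.hasDerivWithinAt)
    (fun u hu => (norm_deriv_sub_deriv_le_integral hf hu.1).trans
      (intervalIntegral.integral_mono_interval le_rfl hu.1 hu.2.le
        (Filter.Eventually.of_forall fun _ => norm_nonneg _)
        (hf.continuous_deriv_deriv.norm.intervalIntegrable _ _)))
    (t + h) ⟨by linarith, le_rfl⟩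
  simpa [mul_comm, sub_right_comm] using hmvt

theorem mul_norm_deriv_le {f : ℝ → E} (hf : ContDiff ℝ 2 f) (t : ℝ) {h : ℝ} (hh : 0 ≤ h) :
    h * ‖deriv f t‖ ≤ ‖f (t + h)‖ + ‖f t‖ + h * ∫ s in t..t + h, ‖deriv (deriv f) s‖ :=
  calc h * ‖deriv f t‖ = ‖f (t + h) - f t - (f (t + h) - f t - h • deriv f t)‖ := by
        rw [sub_sub_cancel, norm_smul, Real.norm_of_nonneg hh]
    _ ≤ ‖f (t + h)‖ + ‖f t‖ + ‖f (t + h) - f t - h • deriv f t‖ :=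
        (norm_sub_le _ _).trans (by gcongr; exact norm_sub_le _ _)
    _ ≤ _ := by gcongr; exact norm_sub_sub_smul_deriv_le hf t hh

theorem mul_integral_norm_deriv_le_of_periodic {f : ℝ → E} {L : ℝ}
    (hper : Function.Periodic f L) (hf : ContDiff ℝ 2 f) (hL : 0 ≤ L) {h : ℝ} (hh : 0 ≤ h) :
    h * ∫ t in 0..L, ‖deriv f t‖ ≤
      2 * (∫ t in 0..L, ‖f t‖) + h ^ 2 * ∫ t in 0..L, ‖deriv (deriv f) t‖ := by
  have hcf : Continuous f := hf.continuous
  have hcf'' : Continuous (deriv (deriv f)) := hf.continuous_deriv_deriv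
  have hpern : Function.Periodic (fun t => ‖f t‖) L := fun t => by simp only [hper t]
  have hper'' : Function.Periodic (fun t => ‖deriv (deriv f) t‖) L := fun t => by
    simp only [hper.deriv.deriv t]
  have hshift : ∫ t in 0..L, ‖f (t + h)‖ = ∫ t in 0..L, ‖f t‖ := by
    rw [intervalIntegral.integral_comp_add_right (fun t => ‖f t‖), zero_add, add_comm,
      hpern.intervalIntegral_add_eq h 0, zero_add]
  have hint₁ : IntervalIntegrable (fun t => ‖f (t + h)‖) volume 0 L :=
    (hcf.comp (continuous_add_const h)).norm.intervalIntegrable 0 L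
  have hint₂ : IntervalIntegrable (fun t => ‖f t‖) volume 0 L := hcf.norm.intervalIntegrable 0 L
  have hint₃ :
      IntervalIntegrable (fun t => h * ∫ s in t..t + h, ‖deriv (deriv f) s‖) volume 0 L :=
    ((continuous_intervalIntegral_add hcf''.norm h).const_smul h).intervalIntegrable 0 L
  calc h * ∫ t in 0..L, ‖deriv f t‖ = ∫ t in 0..L, h * ‖deriv f t‖ :=
        (intervalIntegral.integral_const_mul _ _).symm
    _ ≤ ∫ t in 0..L, (‖f (t + h)‖ + ‖f t‖ + h * ∫ s in t..t + h, ‖deriv (deriv f) s‖) :=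
        intervalIntegral.integral_mono_on hL
          ((hf.continuous_deriv (by norm_num)).norm.const_smul h |>.intervalIntegrable _ _)
          ((hint₁.add hint₂).add hint₃) fun t _ => mul_norm_deriv_le hf t hh
    _ = 2 * (∫ t in 0..L, ‖f t‖) + h ^ 2 * ∫ t in 0..L, ‖deriv (deriv f) t‖ := by
      rw [intervalIntegral.integral_add (hint₁.add hint₂) hint₃,
        intervalIntegral.integral_add hint₁ hint₂, intervalIntegral.integral_const_mul, hshift,
        hper''.intervalIntegral_intervalIntegral_add hcf''.norm h, smul_eq_mul]
      ring

end

theorem stmt_1 (L : ℝ) (hL : 0 < L) (f : ℝ → EuclideanSpace ℝ (Fin 2))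
    (hper : Function.Periodic f L) (hf : ContDiff ℝ 2 f) :
    (∫ t in (0:ℝ)..L, ‖deriv f t‖) ^ 2 ≤
      8 * (∫ t in (0:ℝ)..L, ‖f t‖) * ∫ t in (0:ℝ)..L, ‖deriv (deriv f) t‖ := by
  have key := fun h (hh : 0 ≤ h) => mul_integral_norm_deriv_le_of_periodic hper hf hL.le hh
  set A := ∫ t in (0:ℝ)..L, ‖f t‖
  set B := ∫ t in (0:ℝ)..L, ‖deriv f t‖
  set C := ∫ t in (0:ℝ)..L, ‖deriv (deriv f) t‖
  have hA : 0 ≤ A := intervalIntegral.integral_nonneg hL.le fun _ _ => norm_nonneg _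
  have hB : 0 ≤ B := intervalIntegral.integral_nonneg hL.le fun _ _ => norm_nonneg _
  have hC : 0 ≤ C := intervalIntegral.integral_nonneg hL.le fun _ _ => norm_nonneg _
  have hquad : ∀ h : ℝ, 0 ≤ C * (h * h) + (-B) * h + 2 * A := by
    intro h
    rcases le_or_gt 0 h with hh | hh
    · nlinarith [key h hh]
    · nlinarith [mul_self_nonneg h]
  have := discrim_le_zero hquad
  rw [discrim] at this
  linarith
end

section
/- For each ε ∈ (0,1), let I_ε be an interval and g_ε, h_ε, θ_ε : I_ε → ℝ be integrable functions satisfying: |h_ε(s)| ≤ A·ε for all s; ∫_{I_ε} |g_ε(s)| ds ≤ B·ε^{3/2}; ∫_{I_ε} |θ_ε(s)| ds ≤ C·√ε; and |h_ε(s)| ≤ |g_ε(s)| whenever |θ_ε(s)| ≤ π/4. Then ∫_{I_ε} |h_ε(s)| ds ≤ (B + 4AC/π)·ε^{3/2}. -/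
/-!
Pointwise, `|h| ≤ |g| + (4 A ε / π) |θ|` on `I`: where `|θ| ≤ π/4` this is the comparison
hypothesis, and elsewhere `(4 A ε / π) |θ| > A ε ≥ |h|`. Integrating gives the bound, since
`(4 A ε / π) · C √ε = (4 A C / π) ε^{3/2}`.
-/

open MeasureTheory

theorem abs_le_abs_add_div_mul_abs_of_imp {x y t M c : ℝ} (hc : 0 < c) (hxM : |x| ≤ M)
    (hxy : |t| ≤ c → |x| ≤ |y|) : |x| ≤ |y| + M / c * |t| := by
  have hM : 0 ≤ M := (abs_nonneg x).trans hxM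
  rcases le_or_gt |t| c with htc | htc
  · have : 0 ≤ M / c * |t| := by positivity
    linarith [hxy htc]
  · have : M ≤ M / c * |t| := by
      rw [div_mul_eq_mul_div, le_div_iff₀ hc]
      exact mul_le_mul_of_nonneg_left htc.le hM
    linarith [abs_nonneg y]

theorem integral_abs_le_integral_abs_add_div_mul_integral_abs {α : Type*} [MeasurableSpace α]
    {μ : Measure α} {f g θ : α → ℝ} {M c : ℝ} (hc : 0 < c) (hg : Integrable g μ)
    (hθ : Integrable θ μ) (hfM : ∀ᵐ x ∂μ, |f x| ≤ M)
    (hfg : ∀ᵐ x ∂μ, |θ x| ≤ c → |f x| ≤ |g x|) :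
    ∫ x, |f x| ∂μ ≤ ∫ x, |g x| ∂μ + M / c * ∫ x, |θ x| ∂μ := by
  have hbound : (fun x ↦ |f x|) ≤ᵐ[μ] fun x ↦ |g x| + M / c * |θ x| := by
    filter_upwards [hfM, hfg] with x hxM hxg
    exact abs_le_abs_add_div_mul_abs_of_imp hc hxM hxg
  have hθ' : Integrable (fun x ↦ M / c * |θ x|) μ := hθ.abs.const_mul _
  calc ∫ x, |f x| ∂μ ≤ ∫ x, |g x| + M / c * |θ x| ∂μ :=
        integral_mono_of_nonneg (.of_forall fun x ↦ abs_nonneg _) (hg.abs.add hθ') hbound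
    _ = ∫ x, |g x| ∂μ + M / c * ∫ x, |θ x| ∂μ := by
        rw [integral_add hg.abs hθ', integral_const_mul]

theorem stmt_3_general (ε A B C : ℝ) (hε : 0 < ε)
    (hA : 0 < A)
    (I : Set ℝ) (hIm : MeasurableSet I)
    (g h θ : ℝ → ℝ)
    (hg : IntegrableOn g I) (hθ : IntegrableOn θ I)
    (hhb : ∀ s ∈ I, |h s| ≤ A * ε)
    (hgb : ∫ s in I, |g s| ≤ B * ε ^ ((3:ℝ)/2))
    (hθb : ∫ s in I, |θ s| ≤ C * Real.sqrt ε)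
    (hcomp : ∀ s ∈ I, |θ s| ≤ Real.pi / 4 → |h s| ≤ |g s|) :
    ∫ s in I, |h s| ≤ (B + 4 * A * C / Real.pi) * ε ^ ((3:ℝ)/2) := by
  have hsplit := integral_abs_le_integral_abs_add_div_mul_integral_abs (by positivity) hg hθ
    (ae_restrict_of_forall_mem hIm hhb) (ae_restrict_of_forall_mem hIm hcomp)
  have hpow : ε ^ ((3:ℝ)/2) = ε * Real.sqrt ε := by
    rw [Real.sqrt_eq_rpow, ← Real.rpow_one_add' hε.le (by norm_num)]
    norm_num
  have hθpart : A * ε / (Real.pi / 4) * ∫ s in I, |θ s| ≤ 4 * A * C / Real.pi * ε ^ ((3:ℝ)/2) :=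
    calc A * ε / (Real.pi / 4) * ∫ s in I, |θ s|
        ≤ A * ε / (Real.pi / 4) * (C * Real.sqrt ε) := by gcongr
      _ = 4 * A * C / Real.pi * ε ^ ((3:ℝ)/2) := by rw [hpow]; ring
  linarith

theorem stmt_3 (ε A B C : ℝ) (hε : 0 < ε) (hε1 : ε < 1)
    (hA : 0 < A) (hB : 0 < B) (hC : 0 < C)
    (I : Set ℝ) (hI : I.OrdConnected) (hIm : MeasurableSet I)
    (g h θ : ℝ → ℝ)
    (hg : IntegrableOn g I) (hh : IntegrableOn h I) (hθ : IntegrableOn θ I)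
    (hhb : ∀ s ∈ I, |h s| ≤ A * ε)
    (hgb : ∫ s in I, |g s| ≤ B * ε ^ ((3:ℝ)/2))
    (hθb : ∫ s in I, |θ s| ≤ C * Real.sqrt ε)
    (hcomp : ∀ s ∈ I, |θ s| ≤ Real.pi / 4 → |h s| ≤ |g s|) :
    ∫ s in I, |h s| ≤ (B + 4 * A * C / Real.pi) * ε ^ ((3:ℝ)/2) :=
  stmt_3_general ε A B C hε hA I hIm g h θ hg hθ hhb hgb hθb hcomp
end

section
/- Under the hypotheses of the previous statement, the continuous function φ(p) = a(p)·dist(p,Γ), restricted to the closure of a connected component D of the complement of Γ, cannot have a local minimum at any interior point p₀ ∈ D at which 0 < φ(p₀) < ε₀ = min{1/2, A²/(2A₁)}. -/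
/-!
Along the segment from `p₀` to a nearest point of `Γ`, the distance to `Γ` drops at unit rate
while `a` grows at rate at most `A₁`, so `a · dist(·, Γ)` strictly decreases there as soon as
`A₁ · dist(p₀, Γ) < a(p₀)`; the bound `φ(p₀) < A² / (2 A₁)` guarantees this.
-/

open Metric AffineMap Filter Topology

theorem norm_fderiv_eq_norm_gradient {E : Type*} [NormedAddCommGroup E] [InnerProductSpace ℝ E]
    [CompleteSpace E] (f : E → ℝ) (x : E) : ‖fderiv ℝ f x‖ = ‖gradient f x‖ := by
  rw [← toDual_gradient, LinearIsometryEquiv.norm_map]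

theorem le_add_mul_dist_of_norm_gradient_le {E : Type*} [NormedAddCommGroup E]
    [InnerProductSpace ℝ E] [CompleteSpace E] {f : E → ℝ} (hf : Differentiable ℝ f) {C : ℝ}
    (hC : ∀ x, ‖gradient f x‖ ≤ C) (x y : E) : f y ≤ f x + C * dist y x := by
  have := convex_univ.norm_image_sub_le_of_norm_fderiv_le (fun z _ => hf z)
    (fun z _ => (norm_fderiv_eq_norm_gradient f z).trans_le (hC z))
    (Set.mem_univ x) (Set.mem_univ y)
  rw [dist_eq_norm]
  linarith [le_abs_self (f y - f x), Real.norm_eq_abs (f y - f x)]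

section NearestPoint

variable {E : Type*} [NormedAddCommGroup E] [NormedSpace ℝ E] {Γ : Set E} {f : E → ℝ} {L : ℝ}
  {p₀ q : E}

theorem mul_infDist_lineMap_lt (hq : q ∈ Γ) (hpq : dist p₀ q = infDist p₀ Γ)
    (hf₀ : ∀ x, 0 ≤ f x) (hfL : ∀ x, f x ≤ f p₀ + L * dist x p₀) (hL : 0 ≤ L)
    (hd : 0 < infDist p₀ Γ) (hLd : L * infDist p₀ Γ < f p₀) {s : ℝ} (hs₀ : 0 < s) (hs₁ : s ≤ 1) :
    f (lineMap p₀ q s) * infDist (lineMap p₀ q s) Γ < f p₀ * infDist p₀ Γ := by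
  set d := infDist p₀ Γ
  set p := lineMap p₀ q s
  have hdist_p₀ : dist p p₀ = s * d := by
    rw [dist_lineMap_left, hpq, Real.norm_of_nonneg hs₀.le]
  have hinfDist : infDist p Γ ≤ (1 - s) * d := by
    calc infDist p Γ ≤ dist p q := infDist_le_dist_of_mem hq
      _ = (1 - s) * d := by rw [dist_lineMap_right, hpq, Real.norm_of_nonneg (by linarith)]
  have hfp : f p ≤ f p₀ + L * (s * d) := hdist_p₀ ▸ hfL p
  calc f p * infDist p Γ ≤ (f p₀ + L * (s * d)) * ((1 - s) * d) :=
        mul_le_mul hfp hinfDist infDist_nonneg ((hf₀ p).trans hfp)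
    _ = f p₀ * d - s * d * ((f p₀ - L * d) + L * d * s) := by ring
    _ < f p₀ * d := by
        have : 0 < (f p₀ - L * d) + L * d * s := by nlinarith [mul_nonneg hL hd.le]
        nlinarith [mul_pos (mul_pos hs₀ hd) this]

theorem not_isLocalMin_mul_infDist [ProperSpace E] (hΓ : IsClosed Γ) (hΓne : Γ.Nonempty)
    (hf₀ : ∀ x, 0 ≤ f x) (hfL : ∀ x, f x ≤ f p₀ + L * dist x p₀) (hL : 0 ≤ L)
    (hd : 0 < infDist p₀ Γ) (hLd : L * infDist p₀ Γ < f p₀) :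
    ¬ IsLocalMin (fun p => f p * infDist p Γ) p₀ := by
  intro hmin
  obtain ⟨q, hq, hpq⟩ := hΓ.exists_infDist_eq_dist hΓne p₀
  have hsegment : Tendsto (lineMap p₀ q) (𝓝[>] (0 : ℝ)) (𝓝 p₀) :=
    ((lineMap_continuous (R := ℝ)).tendsto' 0 p₀ (by simp)).mono_left nhdsWithin_le_nhds
  obtain ⟨s, hs_min, hs₀, hs₁⟩ :=
    ((hsegment.eventually hmin).and (Ioc_mem_nhdsGT one_pos)).exists
  exact (mul_infDist_lineMap_lt hq hpq.symm hf₀ hfL hL hd hLd hs₀ hs₁).not_ge hs_min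

end NearestPoint

theorem stmt_6_general (a : EuclideanSpace ℝ (Fin 2) → ℝ) (A Abar A₁ : ℝ)
    (hA : 0 < A) (ha : ContDiff ℝ 1 a)
    (hb : ∀ p, A ≤ a p ∧ a p ≤ Abar)
    (hgr : ∀ p, ‖gradient a p‖ ≤ A₁)
    (Γ : Set (EuclideanSpace ℝ (Fin 2))) (hΓc : IsClosed Γ) (hΓne : Γ.Nonempty)
    (D : Set (EuclideanSpace ℝ (Fin 2))) (hD : IsOpen D)
    (p₀ : EuclideanSpace ℝ (Fin 2)) (hp₀ : p₀ ∈ D)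
    (h1 : 0 < a p₀ * Metric.infDist p₀ Γ)
    (h2 : a p₀ * Metric.infDist p₀ Γ < min (1/2) (A ^ 2 / (2 * A₁))) :
    ¬ IsLocalMinOn (fun p => a p * Metric.infDist p Γ) (closure D) p₀ := by
  set d₀ := infDist p₀ Γ
  have ha₀ : A ≤ a p₀ := (hb p₀).1
  have hA₁ : 0 ≤ A₁ := (norm_nonneg _).trans (hgr p₀)
  have hd₀ : 0 < d₀ := pos_of_mul_pos_right h1 (hA.le.trans ha₀)
  -- `a p₀ * d₀ < A ^ 2 / (2 * A₁) ≤ a p₀ ^ 2 / (2 * A₁)` forces `2 * A₁ * d₀ < a p₀`.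
  have hLd : A₁ * d₀ < a p₀ := by
    rcases hA₁.eq_or_lt with rfl | hA₁pos
    · linarith
    have h2' := (lt_div_iff₀ (by positivity)).mp (h2.trans_le (min_le_right _ _))
    nlinarith [mul_le_mul ha₀ ha₀ hA.le (hA.le.trans ha₀)]
  have hclosure : closure D ∈ 𝓝 p₀ := mem_of_superset (hD.mem_nhds hp₀) subset_closure
  exact fun hmin => not_isLocalMin_mul_infDist hΓc hΓne (fun x => hA.le.trans (hb x).1)
    (le_add_mul_dist_of_norm_gradient_le (ha.differentiable one_ne_zero) hgr p₀)
    hA₁ hd₀ hLd (hmin.isLocalMin hclosure)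

theorem stmt_6 (a : EuclideanSpace ℝ (Fin 2) → ℝ) (A Abar A₁ : ℝ)
    (hA : 0 < A) (ha : ContDiff ℝ 1 a)
    (hb : ∀ p, A ≤ a p ∧ a p ≤ Abar)
    (hgr : ∀ p, ‖gradient a p‖ ≤ A₁)
    (Γ : Set (EuclideanSpace ℝ (Fin 2))) (hΓc : IsClosed Γ) (hΓne : Γ.Nonempty)
    (D : Set (EuclideanSpace ℝ (Fin 2))) (hD : IsOpen D) (hDΓ : D ∩ Γ = ∅)
    (p₀ : EuclideanSpace ℝ (Fin 2)) (hp₀ : p₀ ∈ D)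
    (h1 : 0 < a p₀ * Metric.infDist p₀ Γ)
    (h2 : a p₀ * Metric.infDist p₀ Γ < min (1/2) (A ^ 2 / (2 * A₁))) :
    ¬ IsLocalMinOn (fun p => a p * Metric.infDist p Γ) (closure D) p₀ :=
  stmt_6_general a A Abar A₁ hA ha hb hgr Γ hΓc hΓne D hD p₀ hp₀ h1 h2
end

section
/- Let a : ℝ² → ℝ be C¹ with 0 < A ≤ a(p) and |∇a(p)| ≤ A₁ everywhere, and let ε ∈ (0, ε₀) where ε₀ = min{1/2, A²/(2A₁)}. Then for each angle θ ∈ ℝ there is exactly one radius r > 0 such that the point p = (r cos θ, r sin θ) satisfies r·a(p) = ε; moreover this unique r = r_ε(θ) satisfies ε/Ā ≤ r_ε(θ) ≤ ε/A (where Ā is an upper bound for a), and |r_ε(θ) − ε/a(0)| ≤ (A₁/A) · ε²/(a(r_ε(θ),θ)·a(0)). -/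
/-!
Along the ray of angle `θ` put `g r = a (polarPt r θ)`; by the mean value theorem `g` is
`A₁`-Lipschitz. Then `φ r = r g r` satisfies `φ s - φ r ≥ (s - r) (A - r A₁)`, so `φ` is strictly
increasing while `r A₁ < A`, and every solution of `φ r = ε` has `r ≤ ε / A`, hence `r A₁ < A`
as soon as `ε A₁ < A²`. Existence is the intermediate value theorem on `[0, ε / A]`. Finally
`r - ε / g 0 = r (g 0 - g r) / g 0` with `|g 0 - g r| ≤ A₁ r` and `r = ε / g r`.
-/

noncomputable def polarPt (r θ : ℝ) : EuclideanSpace ℝ (Fin 2) :=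
  (WithLp.equiv 2 (Fin 2 → ℝ)).symm ![r * Real.cos θ, r * Real.sin θ]

lemma abs_sub_le_of_norm_gradient_le {E : Type*} [NormedAddCommGroup E] [InnerProductSpace ℝ E]
    [CompleteSpace E] {f : E → ℝ} (hf : Differentiable ℝ f) {C : ℝ}
    (bound : ∀ x, ‖gradient f x‖ ≤ C) (x y : E) : |f x - f y| ≤ C * ‖x - y‖ := by
  have bound' : ∀ z ∈ Set.univ, ‖fderiv ℝ f z‖ ≤ C := fun z _ => by
    simpa [gradient] using bound z
  simpa [Real.norm_eq_abs] using
    convex_univ.norm_image_sub_le_of_norm_fderiv_le (fun z _ => hf z) bound'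
      (Set.mem_univ y) (Set.mem_univ x)

lemma polarPt_eq_smul (r θ : ℝ) : polarPt r θ = r • polarPt 1 θ := by
  ext i; fin_cases i <;> simp [polarPt]

lemma norm_polarPt_one (θ : ℝ) : ‖polarPt 1 θ‖ = 1 := by
  simp [EuclideanSpace.norm_eq, polarPt, Fin.sum_univ_two]

lemma norm_polarPt_sub (r s θ : ℝ) : ‖polarPt r θ - polarPt s θ‖ = |r - s| := by
  rw [polarPt_eq_smul r, polarPt_eq_smul s, ← sub_smul, norm_smul, norm_polarPt_one,
    Real.norm_eq_abs, mul_one]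

lemma polarPt_zero (θ : ℝ) : polarPt 0 θ = 0 := by
  rw [polarPt_eq_smul, zero_smul]

lemma continuous_polarPt (θ : ℝ) : Continuous fun r => polarPt r θ :=
  (continuous_id.smul continuous_const).congr fun r => (polarPt_eq_smul r θ).symm

section RadialEquation

variable {g : ℝ → ℝ} {A L ε r : ℝ}

lemma nonneg_of_forall_abs_sub_le (hlip : ∀ r s, |g s - g r| ≤ L * |s - r|) : 0 ≤ L := by
  simpa using (abs_nonneg _).trans (hlip 0 1)

lemma le_div_of_mul_apply_eq (hA : 0 < A) (hgA : A ≤ g r) (hr : 0 ≤ r) (h : r * g r = ε) :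
    r ≤ ε / A :=
  (le_div_iff₀ hA).2 (h ▸ mul_le_mul_of_nonneg_left hgA hr)

lemma div_le_of_mul_apply_eq {Abar : ℝ} (hAbar : 0 < Abar) (hgA : g r ≤ Abar) (hr : 0 ≤ r)
    (h : r * g r = ε) : ε / Abar ≤ r :=
  (div_le_iff₀ hAbar).2 (h ▸ mul_le_mul_of_nonneg_left hgA hr)

lemma strictMonoOn_mul_apply (hgA : ∀ r, A ≤ g r) (hlip : ∀ r s, |g s - g r| ≤ L * |s - r|) :
    StrictMonoOn (fun r => r * g r) {r | 0 ≤ r ∧ r * L < A} := by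
  rintro r ⟨hr, hrL⟩ s - hrs
  have hdiff : -(L * (s - r)) ≤ g s - g r := by
    have := hlip r s
    rw [abs_of_pos (sub_pos.2 hrs)] at this
    exact (abs_le.1 this).1
  have hgap : 0 < (s - r) * (A - r * L) := mul_pos (sub_pos.2 hrs) (sub_pos.2 hrL)
  nlinarith [mul_le_mul_of_nonneg_left hdiff hr, mul_le_mul_of_nonneg_left (hgA s) (sub_pos.2 hrs).le]

lemma existsUnique_mul_apply_eq (hg : Continuous g) (hA : 0 < A) (hgA : ∀ r, A ≤ g r)
    (hlip : ∀ r s, |g s - g r| ≤ L * |s - r|) (hε : 0 < ε) (hεL : ε * L < A ^ 2) :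
    ∃! r, 0 < r ∧ r * g r = ε := by
  have hL := nonneg_of_forall_abs_sub_le hlip
  have hsol : ∀ r, 0 < r → r * g r = ε → 0 ≤ r ∧ r * L < A := by
    intro r hr h
    have hrA : r * A ≤ ε := (le_div_iff₀ hA).1 (le_div_of_mul_apply_eq hA (hgA r) hr.le h)
    exact ⟨hr.le, lt_of_mul_lt_mul_right (by nlinarith [mul_le_mul_of_nonneg_right hrA hL]) hA.le⟩
  have hmem : ε ∈ Set.Icc (0 * g 0) (ε / A * g (ε / A)) := by
    refine ⟨by simpa using hε.le, ?_⟩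
    calc ε = ε / A * A := by field_simp
      _ ≤ ε / A * g (ε / A) := mul_le_mul_of_nonneg_left (hgA _) (by positivity)
  obtain ⟨r, hr, hre⟩ :=
    intermediate_value_Icc (by positivity) (continuous_id.mul hg).continuousOn hmem
  have hr0 : 0 < r := hr.1.lt_of_ne fun h => by simp [← h] at hre; linarith
  refine ⟨r, ⟨hr0, hre⟩, fun s ⟨hs0, hse⟩ => ?_⟩
  exact (strictMonoOn_mul_apply hgA hlip).injOn (hsol s hs0 hse) (hsol r hr0 hre) (hse.trans hre.symm)

lemma abs_sub_div_apply_zero_le (hA : 0 < A) (hgA : ∀ r, A ≤ g r)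
    (hlip : ∀ r s, |g s - g r| ≤ L * |s - r|) (hr : 0 ≤ r) (h : r * g r = ε) :
    |r - ε / g 0| ≤ L / A * ε ^ 2 / (g r * g 0) := by
  have hb := hgA r
  have hc := hgA 0
  have hb0 : 0 < g r := hA.trans_le hb
  have hc0 : 0 < g 0 := hA.trans_le hc
  have hL := nonneg_of_forall_abs_sub_le hlip
  have hdiff : |g 0 - g r| ≤ L * r := by simpa [abs_of_nonneg hr] using hlip r 0
  calc |r - ε / g 0| = r * |g 0 - g r| / g 0 := by
        rw [← h, show r - r * g r / g 0 = r * (g 0 - g r) / g 0 by field_simp, abs_div,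
          abs_mul, abs_of_nonneg hr, abs_of_pos hc0]
    _ ≤ r * (L * r) / g 0 := by gcongr
    _ = L * ε ^ 2 / (g r * g r * g 0) := by rw [← h]; field_simp
    _ ≤ L * ε ^ 2 / (A * g r * g 0) := by gcongr
    _ = L / A * ε ^ 2 / (g r * g 0) := by field_simp

end RadialEquation

theorem stmt_7 (a : EuclideanSpace ℝ (Fin 2) → ℝ) (A Abar A₁ : ℝ)
    (hA : 0 < A) (ha : ContDiff ℝ 1 a)
    (hb : ∀ p, A ≤ a p ∧ a p ≤ Abar)
    (hgr : ∀ p, ‖gradient a p‖ ≤ A₁)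
    (ε : ℝ) (hε : 0 < ε) (hε' : ε < min (1/2) (A ^ 2 / (2 * A₁))) :
    ∀ θ : ℝ,
      (∃! r : ℝ, 0 < r ∧ r * a (polarPt r θ) = ε) ∧
      ∀ r : ℝ, 0 < r → r * a (polarPt r θ) = ε →
        ε / Abar ≤ r ∧ r ≤ ε / A ∧
        |r - ε / a 0| ≤ (A₁ / A) * ε ^ 2 / (a (polarPt r θ) * a 0) := by
  intro θ
  set g : ℝ → ℝ := fun r => a (polarPt r θ) with hg
  have hgA : ∀ r, A ≤ g r := fun r => (hb _).1
  have hlip : ∀ r s, |g s - g r| ≤ A₁ * |s - r| := fun r s => by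
    simpa only [hg, norm_polarPt_sub] using
      abs_sub_le_of_norm_gradient_le (ha.differentiable one_ne_zero) hgr (polarPt s θ) (polarPt r θ)
  have hεA₁ : ε * A₁ < A ^ 2 := by
    have hA₁ := nonneg_of_forall_abs_sub_le hlip
    have := hε'.trans_le (min_le_right _ _)
    rcases hA₁.eq_or_lt with h | h
    · simpa [← h] using pow_pos hA 2
    · rw [lt_div_iff₀ (by positivity)] at this; nlinarith
  have ha0 : a 0 = g 0 := by simp [hg, polarPt_zero]
  have hAbar : 0 < Abar := hA.trans_le ((hb 0).1.trans (hb 0).2)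
  refine ⟨existsUnique_mul_apply_eq (ha.continuous.comp (continuous_polarPt θ)) hA hgA hlip hε
    hεA₁, fun r hr h => ⟨div_le_of_mul_apply_eq (g := g) hAbar (hb _).2 hr.le h,
    le_div_of_mul_apply_eq hA (hgA r) hr.le h, ?_⟩⟩
  rw [ha0]
  exact abs_sub_div_apply_zero_le hA hgA hlip hr.le h
end

section
/- Let I ⊆ ℝ be an interval and λ₁, λ₂ : I → ℝ₊ with λ₁ strictly increasing and λ₂ strictly decreasing. Let (X, ≤) be a partial order and Γ : I → X be strictly increasing (α < β implies Γ(α) < Γ(β)). Suppose Γ̃ ∈ X and τ ∈ I are such that there exist α, β ∈ I with α < τ < β and Γ(α) ≤ Γ̃ ≤ Γ(β). Suppose further that the following comparison property holds: for all σ ∈ I, if Γ(σ) ≤ Γ̃ and σ is maximal with this property, then λ₁(σ) ≥ λ₁(τ) or λ₂(σ) ≤ λ₂(τ); and symmetrically for minimal σ with Γ̃ ≤ Γ(σ), λ₁(σ) ≤ λ₁(τ) or λ₂(σ) ≥ λ₂(τ). Then the maximal α with Γ(α) ≤ Γ̃ and the minimal β with Γ̃ ≤ Γ(β) (assumed to exist)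 satisfy α = β = τ, so Γ̃ = Γ(τ). -/
theorem stmt_12 {X : Type*} [PartialOrder X]
    (I : Set ℝ) (lam1 lam2 : ℝ → ℝ)
    (h1 : StrictMonoOn lam1 I) (h2 : StrictAntiOn lam2 I)
    (hpos : ∀ t ∈ I, 0 < lam1 t ∧ 0 < lam2 t)
    (Γ : ℝ → X) (hΓ : ∀ a ∈ I, ∀ b ∈ I, a < b → Γ a < Γ b)
    (G : X) (τ : ℝ) (hτ : τ ∈ I)
    (hbetween : ∃ a ∈ I, ∃ b ∈ I, a < τ ∧ τ < b ∧ Γ a ≤ G ∧ G ≤ Γ b)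
    (hcompMax : ∀ σ ∈ I, (Γ σ ≤ G ∧ ∀ σ' ∈ I, Γ σ' ≤ G → σ' ≤ σ) →
      lam1 τ ≤ lam1 σ ∨ lam2 σ ≤ lam2 τ)
    (hcompMin : ∀ σ ∈ I, (G ≤ Γ σ ∧ ∀ σ' ∈ I, G ≤ Γ σ' → σ ≤ σ') →
      lam1 σ ≤ lam1 τ ∨ lam2 τ ≤ lam2 σ)
    (α : ℝ) (hα : α ∈ I) (hαle : Γ α ≤ G) (hαmax : ∀ σ ∈ I, Γ σ ≤ G → σ ≤ α)
    (β : ℝ) (hβ : β ∈ I) (hβge : G ≤ Γ β) (hβmin : ∀ σ ∈ I, G ≤ Γ σ → β ≤ σ) :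
    α = τ ∧ β = τ ∧ G = Γ τ := by
  have hτα : τ ≤ α := by
    by_contra h
    push_neg at h
    rcases hcompMax α hα ⟨hαle, hαmax⟩ with hc | hc
    · exact absurd hc (not_le.2 (h1 hα hτ h))
    · exact absurd hc (not_le.2 (h2 hα hτ h))
  have hβτ : β ≤ τ := by
    by_contra h
    push_neg at h
    rcases hcompMin β hβ ⟨hβge, hβmin⟩ with hc | hc
    · exact absurd hc (not_le.2 (h1 hτ hβ h))
    · exact absurd hc (not_le.2 (h2 hτ hβ h))
  have hαβ : α ≤ β := by
    by_contra h
    push_neg at h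
    exact absurd (le_trans hαle hβge) (hΓ β hβ α hα h).not_ge
  have hατ : α = τ := le_antisymm (le_trans hαβ hβτ) hτα
  have hβτ' : β = τ := le_antisymm hβτ (le_trans hτα hαβ)
  exact ⟨hατ, hβτ', le_antisymm (hβτ' ▸ hβge) (hατ ▸ hαle)⟩
end

section
/- Let Γ be a rectifiable curve in ℝ² parametrized by arc length p : ℝ → ℝ² (so |p(t)−p(τ)| ≤ |t−τ|), with curvature bounded in absolute value by K₀ > 0 (i.e., p' is Lipschitz with constant K₀). Then for all t, τ with |t−τ| ≤ π/K₀, one has |p(t) − p(τ)| ≥ (2/π)·|t−τ|. -/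
/-!
The tangent direction turns at rate at most `K₀`: for unit vectors the chord is
`‖x - y‖ = 2 sin (angle x y / 2)`, so along a fine subdivision the angle between `p' s` and `p' t`
adds up to at most `K₀ |s - t|`. Hence on `[a, b]` with midpoint `m`,
`⟪p' s, p' m⟫ ≥ cos (K₀ (s - m))`; integrating gives `‖p b - p a‖ ≥ 2 sin (K₀ (b - a) / 2) / K₀`,
and Jordan's inequality `sin x ≥ 2 x / π` on `[0, π / 2]` finishes.
-/

open Real InnerProductGeometry Filter Topology
open scoped RealInnerProductSpace

variable {V : Type*} [NormedAddCommGroup V] [InnerProductSpace ℝ V]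

theorem InnerProductGeometry.angle_eq_two_mul_arcsin_of_norm_eq_one {x y : V}
    (hx : ‖x‖ = 1) (hy : ‖y‖ = 1) : angle x y = 2 * arcsin (‖x - y‖ / 2) := by
  have h0 : 0 ≤ ‖x - y‖ / 2 := by positivity
  have h1 : ‖x - y‖ / 2 ≤ 1 := by linarith [norm_sub_le x y]
  have hinner : ⟪x, y⟫ = cos (2 * arcsin (‖x - y‖ / 2)) := by
    rw [cos_two_mul_eq_one_sub, sin_arcsin (by linarith) h1, div_pow, norm_sub_sq_real, hx, hy]
    ring
  rw [angle, hx, hy, mul_one, div_one, hinner,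
    arccos_cos (by linarith [arcsin_nonneg.2 h0])
      (by linarith [arcsin_le_pi_div_two (‖x - y‖ / 2)])]

section LipschitzUnitVectors

variable {u : ℝ → V} {K : ℝ}

theorem angle_le_two_mul_arcsin_of_lipschitz (hu : ∀ t, ‖u t‖ = 1)
    (hK : ∀ s t, ‖u s - u t‖ ≤ K * |s - t|) (s t : ℝ) :
    angle (u s) (u t) ≤ 2 * arcsin (K * |s - t| / 2) := by
  rw [angle_eq_two_mul_arcsin_of_norm_eq_one (hu s) (hu t)]
  gcongr
  exact hK s t

theorem angle_le_nat_mul_of_lipschitz (hu : ∀ t, ‖u t‖ = 1)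
    (hK : ∀ s t, ‖u s - u t‖ ≤ K * |s - t|) (a δ : ℝ) (n : ℕ) :
    angle (u a) (u (a + n * δ)) ≤ n * (2 * arcsin (K * |δ| / 2)) := by
  induction n with
  | zero => simp [angle_self (norm_ne_zero_iff.1 ((hu a).trans_ne one_ne_zero))]
  | succ n ih =>
    have hstep := angle_le_two_mul_arcsin_of_lipschitz hu hK (a + n * δ) (a + (n + 1 : ℕ) * δ)
    rw [show a + n * δ - (a + (n + 1 : ℕ) * δ) = -δ by push_cast; ring, abs_neg] at hstep
    calc angle (u a) (u (a + (n + 1 : ℕ) * δ))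
        ≤ angle (u a) (u (a + n * δ)) + angle (u (a + n * δ)) (u (a + (n + 1 : ℕ) * δ)) :=
          angle_le_angle_add_angle _ _ _
      _ ≤ n * (2 * arcsin (K * |δ| / 2)) + 2 * arcsin (K * |δ| / 2) := add_le_add ih hstep
      _ = (n + 1 : ℕ) * (2 * arcsin (K * |δ| / 2)) := by push_cast; ring

theorem tendsto_nat_mul_two_mul_arcsin (c : ℝ) :
    Tendsto (fun n : ℕ => n * (2 * arcsin (c / n / 2))) atTop (𝓝 c) := by
  have hderiv : HasDerivAt (fun h => 2 * arcsin (c * h / 2)) c 0 :=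
    (((hasDerivAt_arcsin (x := 0) (by norm_num) (by norm_num)).comp_of_eq 0
      (((hasDerivAt_id 0).const_mul c).div_const 2) (by simp)).const_mul 2).congr_deriv
      (by simp; ring)
  have hinv : Tendsto (fun n : ℕ => (n : ℝ)⁻¹) atTop (𝓝[≠] 0) :=
    (tendsto_inv_atTop_nhdsGT_zero.comp tendsto_natCast_atTop_atTop).mono_right
      (nhdsWithin_mono _ fun x (hx : 0 < x) => hx.ne')
  refine ((hasDerivAt_iff_tendsto_slope_zero.1 hderiv).comp hinv).congr fun n => ?_
  simp [div_eq_mul_inv, mul_comm]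

theorem angle_le_mul_abs_sub_of_lipschitz (hu : ∀ t, ‖u t‖ = 1)
    (hK : ∀ s t, ‖u s - u t‖ ≤ K * |s - t|) (s t : ℝ) :
    angle (u s) (u t) ≤ K * |s - t| := by
  refine ge_of_tendsto (tendsto_nat_mul_two_mul_arcsin (K * |s - t|)) ?_
  filter_upwards [eventually_gt_atTop 0] with n hn
  have hn : (n : ℝ) ≠ 0 := by positivity
  have := angle_le_nat_mul_of_lipschitz hu hK s ((t - s) / n) n
  rwa [mul_div_cancel₀ _ hn, add_sub_cancel, abs_div, Nat.abs_cast, abs_sub_comm,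
    ← mul_div_assoc] at this

theorem cos_mul_abs_sub_le_inner_of_lipschitz (hu : ∀ t, ‖u t‖ = 1)
    (hK : ∀ s t, ‖u s - u t‖ ≤ K * |s - t|) {s t : ℝ} (hst : K * |s - t| ≤ π) :
    cos (K * |s - t|) ≤ ⟪u s, u t⟫ := by
  have hcos : cos (angle (u s) (u t)) = ⟪u s, u t⟫ := by
    rw [cos_angle, hu, hu, mul_one, div_one]
  rw [← hcos]
  exact cos_le_cos_of_nonneg_of_le_pi (angle_nonneg _ _) hst
    (angle_le_mul_abs_sub_of_lipschitz hu hK s t)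

end LipschitzUnitVectors

theorem integral_inner_deriv_le_norm_sub {p : ℝ → V} (hp : Differentiable ℝ p)
    (hp' : Continuous (deriv p)) {v : V} (hv : ‖v‖ ≤ 1) (a b : ℝ) :
    ∫ s in a..b, ⟪deriv p s, v⟫ ≤ ‖p b - p a‖ := by
  have hderiv (s : ℝ) : HasDerivAt (fun t => ⟪p t, v⟫) ⟪deriv p s, v⟫ s := by
    simpa using (hp s).hasDerivAt.inner ℝ (hasDerivAt_const s v)
  rw [intervalIntegral.integral_eq_sub_of_hasDerivAt (fun s _ => hderiv s)
    ((hp'.inner continuous_const).intervalIntegrable a b), ← inner_sub_left]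
  calc ⟪p b - p a, v⟫ ≤ ‖p b - p a‖ * ‖v‖ := real_inner_le_norm _ _
    _ ≤ ‖p b - p a‖ := mul_le_of_le_one_right (norm_nonneg _) hv

theorem integral_cos_mul_sub_midpoint {K : ℝ} (hK : K ≠ 0) (a b : ℝ) :
    ∫ s in a..b, cos (K * (s - (a + b) / 2)) = 2 * sin (K * (b - a) / 2) / K := by
  simp_rw [mul_sub]
  rw [intervalIntegral.integral_comp_mul_sub (fun x => cos x) hK, integral_cos, smul_eq_mul,
    show K * b - K * ((a + b) / 2) = K * (b - a) / 2 by ring,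
    show K * a - K * ((a + b) / 2) = -(K * (b - a) / 2) by ring, sin_neg]
  field_simp
  ring

theorem two_div_pi_mul_le_norm_sub_of_lipschitz_deriv {p : ℝ → V} {K : ℝ} (hK : 0 < K)
    (hp : Differentiable ℝ p) (hunit : ∀ t, ‖deriv p t‖ = 1)
    (hlip : ∀ s t, ‖deriv p s - deriv p t‖ ≤ K * |s - t|) {a b : ℝ} (hab : a ≤ b)
    (hba : K * (b - a) ≤ π) :
    2 / π * (b - a) ≤ ‖p b - p a‖ := by
  set m := (a + b) / 2 with hm
  have hcont : Continuous (deriv p) :=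
    (LipschitzWith.of_dist_le' fun s t => by simpa [dist_eq_norm] using hlip s t).continuous
  have hcos_le : ∀ s ∈ Set.Icc a b, cos (K * (s - m)) ≤ ⟪deriv p s, deriv p m⟫ := by
    intro s ⟨has, hsb⟩
    have hsm : |s - m| ≤ (b - a) / 2 := abs_le.2 ⟨by linarith [hm], by linarith [hm]⟩
    rw [← cos_abs, abs_mul, abs_of_pos hK]
    exact cos_mul_abs_sub_le_inner_of_lipschitz hunit hlip (by nlinarith)
  have hjordan : 2 / π * (K * (b - a) / 2) ≤ sin (K * (b - a) / 2) :=
    mul_le_sin (by positivity) (by linarith)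
  calc 2 / π * (b - a) ≤ 2 * sin (K * (b - a) / 2) / K := by
        rw [le_div_iff₀ hK]; linarith
    _ = ∫ s in a..b, cos (K * (s - m)) := (integral_cos_mul_sub_midpoint hK.ne' a b).symm
    _ ≤ ∫ s in a..b, ⟪deriv p s, deriv p m⟫ :=
        intervalIntegral.integral_mono_on hab
          ((by fun_prop : Continuous fun s => cos (K * (s - m))).intervalIntegrable a b)
          ((hcont.inner continuous_const).intervalIntegrable a b) hcos_le
    _ ≤ ‖p b - p a‖ := integral_inner_deriv_le_norm_sub hp hcont (hunit m).le a b

theorem stmt_13 (K₀ : ℝ) (hK : 0 < K₀) (p : ℝ → EuclideanSpace ℝ (Fin 2))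
    (hd : Differentiable ℝ p) (hunit : ∀ t, ‖deriv p t‖ = 1)
    (hlip : ∀ t s : ℝ, ‖deriv p t - deriv p s‖ ≤ K₀ * |t - s|) :
    ∀ t τ : ℝ, |t - τ| ≤ Real.pi / K₀ →
      (2 / Real.pi) * |t - τ| ≤ ‖p t - p τ‖ := by
  intro t τ hle
  wlog hτt : τ ≤ t generalizing t τ
  · rw [abs_sub_comm, norm_sub_rev]
    exact this τ t (by rwa [abs_sub_comm]) (le_of_not_ge hτt)
  rw [abs_of_nonneg (sub_nonneg.2 hτt)] at hle ⊢
  exact two_div_pi_mul_le_norm_sub_of_lipschitz_deriv hK hd hunit hlip hτt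
    ((le_div_iff₀' hK).1 hle)
end

section
/- Turning-angle perturbation estimate: Let ν̂ ∈ ℝ² be a unit vector, h ∈ ℝ² with |h| ≤ 1/2, and define ν = (ν̂ + h)/|ν̂ + h|. Write θ = arg(ν), θ̂ = arg(ν̂). Then for two unit vectors ν̂⁺, ν̂⁻ and the same perturbation vector h (with |h| ≤ 1/2), the resulting angles satisfy |θ⁺ − θ⁻| ≤ (1 + 6|h|)·|θ̂⁺ − θ̂⁻|. -/
/-!
Write `ν̂ = exp (θ̂ i)`. Then `ν̂ + h = ν̂ (1 + h exp (-θ̂ i))`, and for `‖h‖ < 1` the second factor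
has positive real part, so its argument lies in `(-π/2, π/2)`; together with `|θ - θ̂| < π/2`
this removes the `2π` ambiguity and gives exactly `θ = θ̂ + arg (1 + h exp (-θ̂ i))`.
The correction term is `Im log (1 + h exp (-θ̂ i))`, whose derivative in `θ̂` has modulus at most
`‖h‖ / ‖1 + h exp (-θ̂ i)‖ ≤ ‖h‖ / (1 - ‖h‖) ≤ 2 ‖h‖`, so the mean value theorem bounds the
difference of the corrections at `θ̂⁺` and `θ̂⁻` by `2 ‖h‖ |θ̂⁺ - θ̂⁻|`.
-/

open Complex
open scoped Real

theorem eq_of_exp_mul_I_eq_of_abs_sub_lt {θ ψ : ℝ} (he : exp (θ * I) = exp (ψ * I))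
    (hlt : |θ - ψ| < 2 * π) : θ = ψ := by
  obtain ⟨hlo, hhi⟩ := abs_lt.mp hlt
  rw [← sub_eq_zero, ← Real.cos_eq_one_iff_of_lt_of_lt (by linarith) hhi, ← exp_ofReal_mul_I_re,
    ofReal_sub, sub_mul, exp_sub, he, div_self (exp_ne_zero _), one_re]

theorem exp_mul_I_mul_div_norm {w : ℂ} (hw : w ≠ 0) (φ : ℝ) :
    exp (φ * I) * w / (‖exp (φ * I) * w‖ : ℂ) = exp (↑(φ + arg w) * I) := by
  have hnorm : (‖w‖ : ℂ) ≠ 0 := ofReal_ne_zero.mpr (norm_ne_zero_iff.mpr hw)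
  rw [norm_mul, norm_exp_ofReal_mul_I, one_mul, ofReal_add, add_mul, exp_add,
    div_eq_iff hnorm, mul_assoc, mul_comm _ (‖w‖ : ℂ), norm_mul_exp_arg_mul_I]

theorem exp_mul_I_add_eq_mul (h : ℂ) (φ : ℝ) :
    exp (φ * I) + h = exp (φ * I) * (1 + h * exp (-(φ * I))) := by
  rw [mul_add, mul_one, mul_left_comm, ← exp_add, add_neg_cancel, exp_zero, mul_one]

theorem norm_mul_exp_neg_mul_I (h : ℂ) (φ : ℝ) : ‖h * exp (-(φ * I))‖ = ‖h‖ := by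
  rw [norm_mul, ← neg_mul, ← ofReal_neg, norm_exp_ofReal_mul_I, mul_one]

theorem one_sub_norm_le_re_one_add_mul_exp (h : ℂ) (φ : ℝ) :
    1 - ‖h‖ ≤ (1 + h * exp (-(φ * I))).re := by
  rw [add_re, one_re, ← norm_mul_exp_neg_mul_I h φ]
  linarith [neg_abs_le (h * exp (-(φ * I))).re, abs_re_le_norm (h * exp (-(φ * I)))]

theorem eq_add_arg_of_exp_mul_I_eq {h : ℂ} (hh : ‖h‖ < 1) {θ φ : ℝ}
    (he : exp (θ * I) = (exp (φ * I) + h) / (‖exp (φ * I) + h‖ : ℂ))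
    (hb : |θ - φ| < π / 2) :
    θ = φ + arg (1 + h * exp (-(φ * I))) := by
  set w := 1 + h * exp (-(φ * I))
  have hre : 0 < w.re := by linarith [one_sub_norm_le_re_one_add_mul_exp h φ]
  have hw : w ≠ 0 := fun h0 => by simp [h0] at hre
  have harg : |arg w| < π / 2 := abs_arg_lt_pi_div_two_iff.mpr (Or.inl hre)
  rw [exp_mul_I_add_eq_mul, exp_mul_I_mul_div_norm hw] at he
  refine eq_of_exp_mul_I_eq_of_abs_sub_lt he ?_
  calc |θ - (φ + arg w)| ≤ |θ - φ| + |arg w| := by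
        rw [← sub_sub]; exact abs_sub _ _
    _ < 2 * π := by linarith [Real.pi_pos]

theorem hasDerivAt_log_one_add_mul_exp {h : ℂ} (hh : ‖h‖ < 1) (φ : ℝ) :
    HasDerivAt (fun φ : ℝ => log (1 + h * exp (-(φ * I))))
      (-(h * exp (-(φ * I)) * I) / (1 + h * exp (-(φ * I)))) φ := by
  have hexp : HasDerivAt (fun φ : ℝ => exp (-(φ * I))) (exp (-(φ * I)) * -I) φ := by
    simpa using ((hasDerivAt_id φ).ofReal_comp.mul_const I).neg.cexp
  convert ((hexp.const_mul h).const_add 1).clog_real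
    (mem_slitPlane_of_norm_lt_one ((norm_mul_exp_neg_mul_I h φ).trans_lt hh)) using 2
  ring

theorem abs_arg_one_add_mul_exp_sub_le {h : ℂ} (hh : ‖h‖ < 1) (a b : ℝ) :
    |arg (1 + h * exp (-(a * I))) - arg (1 + h * exp (-(b * I)))| ≤
      ‖h‖ / (1 - ‖h‖) * |a - b| := by
  have hderiv := fun φ => (imCLM.hasFDerivAt.comp_hasDerivAt φ
    (hasDerivAt_log_one_add_mul_exp hh φ)).hasDerivWithinAt (s := Set.univ)
  have hbound : ∀ φ : ℝ, ‖im (-(h * exp (-(φ * I)) * I) / (1 + h * exp (-(φ * I))))‖ ≤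
      ‖h‖ / (1 - ‖h‖) := by
    intro φ
    have hw : 1 - ‖h‖ ≤ ‖1 + h * exp (-(φ * I))‖ :=
      (one_sub_norm_le_re_one_add_mul_exp h φ).trans (re_le_norm _)
    calc _ ≤ ‖-(h * exp (-(φ * I)) * I) / (1 + h * exp (-(φ * I)))‖ := abs_im_le_norm _
      _ = ‖h‖ / ‖1 + h * exp (-(φ * I))‖ := by
        rw [norm_div, norm_neg, norm_mul, norm_mul_exp_neg_mul_I, norm_I, mul_one]
      _ ≤ ‖h‖ / (1 - ‖h‖) := div_le_div_of_nonneg_left (norm_nonneg h) (by linarith) hw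
  simpa [log_im] using convex_univ.norm_image_sub_le_of_norm_hasDerivWithin_le
    (fun φ _ => hderiv φ) (fun φ _ => hbound φ) (Set.mem_univ b) (Set.mem_univ a)

theorem stmt_19_general (h : ℂ) (hh : ‖h‖ ≤ 1 / 2)
    (θp θm θhp θhm : ℝ)
    (he1 : Complex.exp (θp * Complex.I) =
      (Complex.exp (θhp * Complex.I) + h) / ((‖Complex.exp (θhp * Complex.I) + h‖ : ℝ) : ℂ))
    (he2 : Complex.exp (θm * Complex.I) =
      (Complex.exp (θhm * Complex.I) + h) / ((‖Complex.exp (θhm * Complex.I) + h‖ : ℝ) : ℂ))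
    (hb1 : |θp - θhp| < Real.pi / 2) (hb2 : |θm - θhm| < Real.pi / 2) :
    |θp - θm| ≤ (1 + 6 * ‖h‖) * |θhp - θhm| := by
  have hh1 : ‖h‖ < 1 := by linarith
  have hlip := abs_arg_one_add_mul_exp_sub_le hh1 θhp θhm
  have hK : ‖h‖ / (1 - ‖h‖) ≤ 6 * ‖h‖ := by
    rw [div_le_iff₀ (by linarith)]
    nlinarith [norm_nonneg h]
  rw [eq_add_arg_of_exp_mul_I_eq hh1 he1 hb1, eq_add_arg_of_exp_mul_I_eq hh1 he2 hb2]
  calc _ = |(θhp - θhm) + (arg (1 + h * exp (-(θhp * I))) - arg (1 + h * exp (-(θhm * I))))| := by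
        ring_nf
    _ ≤ |θhp - θhm| + ‖h‖ / (1 - ‖h‖) * |θhp - θhm| := (abs_add_le _ _).trans (by linarith)
    _ ≤ (1 + 6 * ‖h‖) * |θhp - θhm| := by nlinarith [abs_nonneg (θhp - θhm)]

theorem stmt_19 (h : ℂ) (hh : ‖h‖ ≤ 1 / 2)
    (θp θm θhp θhm : ℝ)
    (hne1 : Complex.exp (θhp * Complex.I) + h ≠ 0)
    (hne2 : Complex.exp (θhm * Complex.I) + h ≠ 0)
    (he1 : Complex.exp (θp * Complex.I) =
      (Complex.exp (θhp * Complex.I) + h) / ((‖Complex.exp (θhp * Complex.I) + h‖ : ℝ) : ℂ))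
    (he2 : Complex.exp (θm * Complex.I) =
      (Complex.exp (θhm * Complex.I) + h) / ((‖Complex.exp (θhm * Complex.I) + h‖ : ℝ) : ℂ))
    (hb1 : |θp - θhp| < Real.pi / 2) (hb2 : |θm - θhm| < Real.pi / 2) :
    |θp - θm| ≤ (1 + 6 * ‖h‖) * |θhp - θhm| :=
  stmt_19_general h hh θp θm θhp θhm he1 he2 hb1 hb2
end
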